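/- Define a Markov chain (L_i)_{i≥0} on the positive integers as follows: given L_i = ℓ, draw X ~ Binomial(ℓ, 1/2) independently of the past and set L_{i+1} = X if X ≥ 1 and L_{i+1} = ℓ if X = 0. Then the state 1 is absorbing, and for every constant α > 0 there exists a constant C such that for all integers n ≥ 2 and all starting values 1 ≤ L_0 ≤ n, Pr[ L_{⌈C·log n⌉} ≥ 2 ] ≤ n^{−α}. -/

import Mathlib

/-
Let `Φ m = m` for `m ≥ 2` and `Φ m = 0` for `m ≤ 1` (`leaderPotential`). One round halves the
expectation of `Φ` exactly: from `ℓ ≥ 2`, sending the outcome `X = 0` back to `ℓ` gains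
`ℓ · P(X = 0)`, while `Φ 1 = 0` loses `1 · P(X = 1) = ℓ · P(X = 0)`, so `E Φ = E X = ℓ / 2`.
Hence `E Φ(L_t) = 2^{-t} Φ(L_0) ≤ 2^{-t} n`, and since `Φ ≥ 1` on `{ℓ ≥ 2}`, Markov's inequality
gives the bound as soon as `2^t ≥ n^{α+1}`, i.e. for `C = (α + 1) / log 2`.
-/

set_option autoImplicit false

open scoped ENNReal

/-- One round of the leader-elimination chain: from state `ℓ`, draw `X ~ Binomial(ℓ, 1/2)`
and move to `X` if `X ≥ 1`, and stay at `ℓ` if `X = 0`. -/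
noncomputable def leaderKernel (ℓ : ℕ) : PMF ℕ :=
  (PMF.binomial 2⁻¹ (by simp) ℓ).map fun x => if (x : ℕ) = 0 then ℓ else (x : ℕ)

/-- The distribution of the chain after `i` rounds, started at `l0`. -/
noncomputable def leaderChain (l0 : ℕ) : ℕ → PMF ℕ
  | 0 => PMF.pure l0
  | i + 1 => (leaderChain l0 i).bind leaderKernel

open Finset

namespace PMF

variable {α β : Type*}

lemma tsum_pure_mul (a : α) (g : α → ℝ≥0∞) : ∑' b, pure a b * g b = g a := by
  simp [pure_apply]

lemma tsum_bind_mul (p : PMF α) (k : α → PMF β) (g : β → ℝ≥0∞) :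
    ∑' b, p.bind k b * g b = ∑' a, p a * ∑' b, k a b * g b := by
  simp only [bind_apply, ← ENNReal.tsum_mul_right, ← ENNReal.tsum_mul_left, mul_assoc]
  exact ENNReal.tsum_comm

lemma tsum_map_mul (f : α → β) (p : PMF α) (g : β → ℝ≥0∞) :
    ∑' b, p.map f b * g b = ∑' a, p a * g (f a) := by
  simp only [← bind_pure_comp, tsum_bind_mul, Function.comp_apply, tsum_pure_mul]

lemma toOuterMeasure_le_tsum_mul (p : PMF α) {s : Set α} {g : α → ℝ≥0∞}
    (hg : ∀ a ∈ s, 1 ≤ g a) : p.toOuterMeasure s ≤ ∑' a, p a * g a := by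
  rw [toOuterMeasure_apply]
  refine ENNReal.tsum_le_tsum fun a => ?_
  by_cases ha : a ∈ s
  · rw [Set.indicator_of_mem ha]
    exact le_mul_of_one_le_right' (hg a ha)
  · simp [Set.indicator_of_notMem ha]

end PMF

lemma leaderKernel_eq_map (ℓ : ℕ) :
    leaderKernel ℓ = (PMF.binomial 2⁻¹ (by simp) ℓ).map
      fun x : Fin (ℓ + 1) => if (x : ℕ) = 0 then ℓ else x :=
  PMF.map_comp _ _ _

lemma leaderKernel_one : leaderKernel 1 = PMF.pure 1 := by
  rw [leaderKernel_eq_map]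
  convert PMF.map_const _ (1 : ℕ) using 2
  funext x
  fin_cases x <;> rfl

def leaderPotential (m : ℕ) : ℕ := if m ≤ 1 then 0 else m

lemma one_le_leaderPotential {m : ℕ} (hm : 2 ≤ m) : 1 ≤ leaderPotential m := by
  rw [leaderPotential, if_neg (by omega)]
  omega

lemma leaderPotential_le_self (m : ℕ) : leaderPotential m ≤ m := by
  unfold leaderPotential
  split <;> omega

lemma two_mul_sum_leaderPotential_mul_choose (ℓ : ℕ) :
    2 * ∑ x ∈ range (ℓ + 1), leaderPotential (if x = 0 then ℓ else x) * ℓ.choose x =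
      2 ^ ℓ * leaderPotential ℓ := by
  rcases lt_or_ge ℓ 2 with hℓ | hℓ
  · interval_cases ℓ <;> rfl
  obtain ⟨m, rfl⟩ : ∃ m, ℓ = m + 2 := ⟨ℓ - 2, by omega⟩
  have hsum : ∑ x ∈ range (m + 3), leaderPotential (if x = 0 then m + 2 else x) * (m + 2).choose x
      = ∑ x ∈ range (m + 3), x * (m + 2).choose x := by
    simp [sum_range_succ' _ (m + 2), sum_range_succ' _ (m + 1), leaderPotential]
  rw [hsum, Nat.sum_range_mul_choose, leaderPotential, if_neg (by omega),
    show m + 2 - 1 = m + 1 from rfl]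
  ring

lemma tsum_leaderKernel_mul_leaderPotential (ℓ : ℕ) :
    ∑' m, leaderKernel ℓ m * leaderPotential m = 2⁻¹ * leaderPotential ℓ := by
  have hweight : ∀ x : Fin (ℓ + 1),
      PMF.binomial 2⁻¹ (by simp) ℓ x = 2⁻¹ ^ ℓ * (ℓ.choose x : ℝ≥0∞) := by
    intro x
    rw [PMF.binomial_apply, ENNReal.coe_inv_two, ENNReal.one_sub_inv_two, Fin.val_last,
      ← pow_add, Nat.add_sub_cancel' x.is_le]
  have hsum := congr_arg (Nat.cast : ℕ → ℝ≥0∞) (two_mul_sum_leaderPotential_mul_choose ℓ)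
  push_cast at hsum
  rw [leaderKernel_eq_map, PMF.tsum_map_mul, tsum_fintype]
  simp only [hweight]
  rw [Fin.sum_univ_eq_sum_range
    (fun x => 2⁻¹ ^ ℓ * (ℓ.choose x : ℝ≥0∞) * leaderPotential (if x = 0 then ℓ else x))]
  set S := ∑ x ∈ range (ℓ + 1),
    (leaderPotential (if x = 0 then ℓ else x) : ℝ≥0∞) * ℓ.choose x
  have hhalf : (2⁻¹ : ℝ≥0∞) * 2 = 1 := ENNReal.inv_mul_cancel two_ne_zero ENNReal.ofNat_ne_top
  calc _ = 2⁻¹ ^ ℓ * S * (2⁻¹ * 2) := by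
        rw [hhalf, mul_one, mul_sum]
        exact sum_congr rfl fun x _ => by ring
    _ = 2⁻¹ * (2⁻¹ ^ ℓ * (2 * S)) := by ring
    _ = 2⁻¹ * leaderPotential ℓ := by
        rw [hsum, ← mul_assoc (2⁻¹ ^ ℓ), ← mul_pow, hhalf, one_pow, one_mul]

lemma tsum_leaderChain_mul_leaderPotential (l0 i : ℕ) :
    ∑' m, leaderChain l0 i m * leaderPotential m = 2⁻¹ ^ i * leaderPotential l0 := by
  induction i with
  | zero => simp [leaderChain]
  | succ i ih =>
    simp only [leaderChain, PMF.tsum_bind_mul, tsum_leaderKernel_mul_leaderPotential,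
      mul_left_comm _ (2⁻¹ : ℝ≥0∞), ENNReal.tsum_mul_left, ih, pow_succ]
    ring

lemma leaderChain_toOuterMeasure_two_le_le (l0 i : ℕ) :
    (leaderChain l0 i).toOuterMeasure {ℓ | 2 ≤ ℓ} ≤ 2⁻¹ ^ i * leaderPotential l0 := by
  rw [← tsum_leaderChain_mul_leaderPotential]
  exact PMF.toOuterMeasure_le_tsum_mul _ fun m hm => mod_cast one_le_leaderPotential hm

lemma two_inv_pow_mul_le_rpow_neg {x α : ℝ} (hx : 0 < x) {t : ℕ}
    (ht : (α + 1) * Real.log x ≤ t * Real.log 2) : (2⁻¹ : ℝ) ^ t * x ≤ x ^ (-α) := by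
  have hpow : x ^ (α + 1) ≤ 2 ^ t := by
    rw [← Real.rpow_natCast, Real.rpow_def_of_pos hx, Real.rpow_def_of_pos two_pos]
    exact Real.exp_le_exp.mpr (by linarith)
  rw [inv_pow, inv_mul_le_iff₀ (by positivity)]
  calc x = x ^ (α + 1) * x ^ (-α) := by rw [← Real.rpow_add hx]; norm_num
    _ ≤ 2 ^ t * x ^ (-α) := by gcongr

/-- In the leader-elimination Markov chain, state `1` is absorbing, and
for every `α > 0` there is a constant `C` such that for all `n ≥ 2` and all starting values
`1 ≤ L_0 ≤ n`, the probability that after `⌈C·log n⌉` rounds at least two leaders remain is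
at most `n^{−α}`. -/
theorem leader_chain_absorbs_quickly :
    leaderKernel 1 = PMF.pure 1 ∧
      ∀ α : ℝ, 0 < α → ∃ C : ℝ, 0 < C ∧
        ∀ n : ℕ, 2 ≤ n → ∀ l0 : ℕ, 1 ≤ l0 → l0 ≤ n →
          (leaderChain l0 ⌈C * Real.log n⌉₊).toOuterMeasure {ℓ | 2 ≤ ℓ} ≤
            ENNReal.ofReal ((n : ℝ) ^ (-α)) := by
  have hlog2 : 0 < Real.log 2 := Real.log_pos one_lt_two
  refine ⟨leaderKernel_one, fun α hα => ⟨(α + 1) / Real.log 2, by positivity,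
    fun n hn l0 _ hl0n => ?_⟩⟩
  set t := ⌈(α + 1) / Real.log 2 * Real.log n⌉₊
  have ht : (α + 1) * Real.log n ≤ t * Real.log 2 :=
    calc (α + 1) * Real.log n = (α + 1) / Real.log 2 * Real.log n * Real.log 2 := by
          field_simp
      _ ≤ t * Real.log 2 := by gcongr; exact Nat.le_ceil _
  calc _ ≤ 2⁻¹ ^ t * (leaderPotential l0 : ℝ≥0∞) := leaderChain_toOuterMeasure_two_le_le l0 t
    _ ≤ 2⁻¹ ^ t * n := by gcongr; exact_mod_cast (leaderPotential_le_self l0).trans hl0n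
    _ = ENNReal.ofReal ((2⁻¹ : ℝ) ^ t * n) := by
        rw [ENNReal.ofReal_mul (by positivity), ENNReal.ofReal_pow (by norm_num),
          ENNReal.ofReal_natCast, ENNReal.ofReal_inv_of_pos two_pos, ENNReal.ofReal_ofNat]
    _ ≤ ENNReal.ofReal ((n : ℝ) ^ (-α)) :=
        ENNReal.ofReal_le_ofReal (two_inv_pow_mul_le_rpow_neg (by positivity) ht)
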